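/- arXiv:0805.3176 — 3 statements merged into one kernel-verified Lean document; each statement's English description precedes it below -/
import Mathlib

section
/- Let m and n be positive integers with n ≥ m, let β₁, …, β_m be distinct complex numbers, and put G(x) = (x−β₁)⋯(x−β_m). An entire function F: ℂ → ℂ satisfies the differential equation Σ_{i=0}^{m} (−1)^i · C(n−m+i, i) · G^{(i)}(x) · F^{(m−i)}(x) = 0 for all x ∈ ℂ if and only if F(x) = Σ_{i=1}^{m} γ_i (x−β_i)ⁿ for some complex numbers γ₁, …, γ_m. Here C(n−m+i, i) denotes the binomial coefficient and G^{(i)}, F^{(m−i)} denote derivatives. -/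
/-!
Each `(x - βⱼ)ⁿ` solves the equation: by `C(n-m+i, i) i! n^{\underline{m-i}} = n^{\underline m}`,
the left-hand side at `z` is `n^{\underline m} (z - βⱼ)^{n-m}` times the Taylor expansion of `G`
about `z` evaluated at the root `βⱼ`. Conversely, at a point `x₀` with `G x₀ ≠ 0` a Vandermonde
argument gives a combination `P` of these solutions with the same first `m` derivatives as `F`,
and since the equation has leading coefficient `G`, it determines all higher derivatives at `x₀`
from these; so `F` and `P` have the same Taylor series and agree.
-/

open Finset Polynomial
open scoped ContDiff Nat

section

variable {𝕜 : Type*} [NontriviallyNormedField 𝕜]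

theorem iteratedDeriv_iteratedDeriv (f : 𝕜 → 𝕜) (i l : ℕ) :
    iteratedDeriv l (iteratedDeriv i f) = iteratedDeriv (i + l) f := by
  simp only [iteratedDeriv_eq_iterate, ← Function.iterate_add_apply, add_comm]

theorem ContDiff.iteratedDeriv {f : 𝕜 → 𝕜} (hf : ContDiff 𝕜 ∞ f) (i : ℕ) :
    ContDiff 𝕜 ∞ (iteratedDeriv i f) := by
  rw [iteratedDeriv_eq_iterate]
  exact hf.iterate_deriv i

section LinearODE

variable {m : ℕ} {a : ℕ → 𝕜 → 𝕜} {x₀ : 𝕜}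

/-- Differentiating the equation `t` times expresses `a₀ h^{(m+t)}` through lower derivatives. -/
theorem iteratedDeriv_eq_zero_of_linearODE {h : 𝕜 → 𝕜}
    (ha : ∀ i, ContDiff 𝕜 ∞ (a i)) (hh : ContDiff 𝕜 ∞ h)
    (hode : ∀ z, ∑ i ∈ range (m + 1), a i z * iteratedDeriv (m - i) h z = 0)
    (ha₀ : a 0 x₀ ≠ 0) (hinit : ∀ k < m, iteratedDeriv k h x₀ = 0) (k : ℕ) :
    iteratedDeriv k h x₀ = 0 := by
  induction k using Nat.strong_induction_on with
  | _ k ih =>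
  rcases lt_or_ge k m with hk | hk
  · exact hinit k hk
  obtain ⟨t, rfl⟩ := Nat.exists_eq_add_of_le hk
  have hsmooth : ∀ i, ContDiff 𝕜 ∞ (fun z => a i z * iteratedDeriv (m - i) h z) :=
    fun i => (ha i).mul (hh.iteratedDeriv _)
  have hleibniz : ∀ i, iteratedDeriv t (fun z => a i z * iteratedDeriv (m - i) h z) x₀ =
      ∑ l ∈ range (t + 1), t.choose l * iteratedDeriv l (a i) x₀ *
        iteratedDeriv (m - i + (t - l)) h x₀ := fun i => by
    rw [iteratedDeriv_fun_mul ((ha i).contDiffAt.of_le (mod_cast le_top))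
      ((hh.iteratedDeriv _).contDiffAt.of_le (mod_cast le_top))]
    simp only [iteratedDeriv_iteratedDeriv]
  have hdiff := congrArg (fun f => iteratedDeriv t f x₀) (funext hode)
  simp only [iteratedDeriv_fun_const_zero] at hdiff
  rw [iteratedDeriv_fun_sum fun i _ => ((hsmooth i).contDiffAt.of_le (mod_cast le_top))] at hdiff
  simp only [hleibniz] at hdiff
  rw [sum_eq_single_of_mem 0 (by simp), sum_eq_single_of_mem 0 (by simp)] at hdiff
  · simpa [ha₀] using hdiff
  · intro l hl hl0
    rw [ih _ (by simp at hl; omega), mul_zero]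
  · intro i hi hi0
    refine sum_eq_zero fun l hl => ?_
    rw [ih _ (by simp at hi hl; omega), mul_zero]

theorem iteratedDeriv_eq_of_linearODE {f g : 𝕜 → 𝕜}
    (ha : ∀ i, ContDiff 𝕜 ∞ (a i)) (hf : ContDiff 𝕜 ∞ f) (hg : ContDiff 𝕜 ∞ g)
    (hf_ode : ∀ z, ∑ i ∈ range (m + 1), a i z * iteratedDeriv (m - i) f z = 0)
    (hg_ode : ∀ z, ∑ i ∈ range (m + 1), a i z * iteratedDeriv (m - i) g z = 0)
    (ha₀ : a 0 x₀ ≠ 0) (hinit : ∀ k < m, iteratedDeriv k f x₀ = iteratedDeriv k g x₀) (k : ℕ) :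
    iteratedDeriv k f x₀ = iteratedDeriv k g x₀ := by
  have hsub : ∀ k z, iteratedDeriv k (fun x => f x - g x) z =
      iteratedDeriv k f z - iteratedDeriv k g z :=
    fun k z => iteratedDeriv_fun_sub (hf.contDiffAt.of_le (mod_cast le_top))
      (hg.contDiffAt.of_le (mod_cast le_top))
  have hode : ∀ z,
      ∑ i ∈ range (m + 1), a i z * iteratedDeriv (m - i) (fun x => f x - g x) z = 0 := by
    simp only [hsub, mul_sub, sum_sub_distrib, hf_ode, hg_ode, sub_self, implies_true]
  have h := iteratedDeriv_eq_zero_of_linearODE ha (hf.sub hg) hode ha₀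
    (fun k hk => by rw [hsub, hinit k hk, sub_self]) k
  rwa [hsub, sub_eq_zero] at h

end LinearODE

end

theorem Complex.eq_of_linearODE {m : ℕ} {a : ℕ → ℂ → ℂ} {x₀ : ℂ}
    {f g : ℂ → ℂ} (ha : ∀ i, Differentiable ℂ (a i)) (hf : Differentiable ℂ f)
    (hg : Differentiable ℂ g)
    (hf_ode : ∀ z, ∑ i ∈ range (m + 1), a i z * iteratedDeriv (m - i) f z = 0)
    (hg_ode : ∀ z, ∑ i ∈ range (m + 1), a i z * iteratedDeriv (m - i) g z = 0)
    (ha₀ : a 0 x₀ ≠ 0) (hinit : ∀ k < m, iteratedDeriv k f x₀ = iteratedDeriv k g x₀) :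
    f = g := by
  have hderiv := iteratedDeriv_eq_of_linearODE (fun i => (ha i).contDiff)
    hf.contDiff hg.contDiff hf_ode hg_ode ha₀ hinit
  funext z
  rw [← taylorSeries_eq_of_entire' x₀ z hf, ← taylorSeries_eq_of_entire' x₀ z hg]
  simp only [hderiv]

theorem Nat.choose_mul_factorial_mul_descFactorial {m n i : ℕ} (hi : i ≤ m) (hmn : m ≤ n) :
    (n - m + i).choose i * i ! * n.descFactorial (m - i) = n.descFactorial m := by
  rw [mul_comm _ i !, ← descFactorial_eq_factorial_mul_choose,
    ← descFactorial_mul_descFactorial (sub_le m i)]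
  congr 2 <;> omega

theorem Polynomial.sum_hasseDeriv_eval_mul_sub_pow {R : Type*} [CommRing R] {p : R[X]} {N : ℕ}
    (hp : p.natDegree ≤ N) (z b : R) :
    ∑ i ∈ range (N + 1), (hasseDeriv i p).eval z * (b - z) ^ i = p.eval b := by
  rw [← taylor_eval_sub z p b, eval_eq_sum_range' (n := N + 1) (by rw [natDegree_taylor]; omega)]
  simp only [taylor_coeff]

section

variable {𝕜 : Type*} [NontriviallyNormedField 𝕜]

theorem Polynomial.iteratedDeriv_eval (p : 𝕜[X]) (k : ℕ) (z : 𝕜) :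
    iteratedDeriv k (fun x => p.eval x) z = k ! * (hasseDeriv k p).eval z := by
  have hiter : iteratedDeriv k (fun x => p.eval x) = fun x => (derivative^[k] p).eval x := by
    induction k with
    | zero => rfl
    | succ k ih =>
      funext x
      rw [iteratedDeriv_succ, ih, Function.iterate_succ_apply', Polynomial.deriv]
  rw [hiter, ← factorial_smul_hasseDeriv]
  simp [nsmul_eq_mul]

theorem iteratedDeriv_sub_pow (b : 𝕜) (n k : ℕ) (z : 𝕜) :
    iteratedDeriv k (fun x => (x - b) ^ n) z = n.descFactorial k * (z - b) ^ (n - k) := by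
  simp [iteratedDeriv_comp_sub_const k (· ^ n) b]

theorem iteratedDeriv_sum_mul_sub_pow {ι : Type*} [Fintype ι] (γ β : ι → 𝕜) (n k : ℕ) (z : 𝕜) :
    iteratedDeriv k (fun x => ∑ j, γ j * (x - β j) ^ n) z =
      ∑ j, γ j * (n.descFactorial k * (z - β j) ^ (n - k)) := by
  rw [iteratedDeriv_fun_sum fun j _ => by fun_prop]
  simp only [iteratedDeriv_const_mul_field, iteratedDeriv_sub_pow]

noncomputable def diffEqnLHS (m n : ℕ) (G F : 𝕜 → 𝕜) (z : 𝕜) : 𝕜 :=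
  ∑ i ∈ range (m + 1), (-1 : 𝕜) ^ i * ((n - m + i).choose i : 𝕜) *
    iteratedDeriv i G z * iteratedDeriv (m - i) F z

theorem diffEqnLHS_polynomial_sub_pow {m n : ℕ} {p : 𝕜[X]} (hp : p.natDegree ≤ m) (hmn : m ≤ n)
    {b : 𝕜} (hb : p.IsRoot b) (z : 𝕜) :
    diffEqnLHS m n (fun x => p.eval x) (fun x => (x - b) ^ n) z = 0 := by
  have hterm : ∀ i ∈ range (m + 1), (-1 : 𝕜) ^ i * ((n - m + i).choose i : 𝕜) *
      iteratedDeriv i (fun x => p.eval x) z * iteratedDeriv (m - i) (fun x => (x - b) ^ n) z =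
      n.descFactorial m * (z - b) ^ (n - m) * ((hasseDeriv i p).eval z * (b - z) ^ i) := by
    intro i hi
    have him : i ≤ m := by simpa [Nat.lt_succ_iff] using hi
    have hcoeff : ((n - m + i).choose i : 𝕜) * (i ! : 𝕜) * (n.descFactorial (m - i) : 𝕜) =
        n.descFactorial m := by
      rw [← Nat.choose_mul_factorial_mul_descFactorial him hmn]
      push_cast
      rfl
    rw [p.iteratedDeriv_eval, iteratedDeriv_sub_pow, ← hcoeff,
      show n - (m - i) = n - m + i by omega, pow_add, ← neg_sub z b, neg_pow (z - b)]
    ring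
  rw [diffEqnLHS, sum_congr rfl hterm, ← mul_sum, sum_hasseDeriv_eval_mul_sub_pow hp, hb.eq_zero,
    mul_zero]

theorem diffEqnLHS_sum_mul_sub_pow {ι : Type*} [Fintype ι] (m n : ℕ) (G : 𝕜 → 𝕜)
    (γ β : ι → 𝕜) (z : 𝕜) :
    diffEqnLHS m n G (fun x => ∑ j, γ j * (x - β j) ^ n) z =
      ∑ j, γ j * diffEqnLHS m n G (fun x => (x - β j) ^ n) z := by
  simp only [diffEqnLHS, iteratedDeriv_sum_mul_sub_pow, iteratedDeriv_sub_pow, mul_sum]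
  rw [sum_comm]
  refine sum_congr rfl fun j _ => sum_congr rfl fun i _ => ?_
  ring

/-- Writing `uⱼ = (x₀ - βⱼ)⁻¹`, the `k`-th derivative at `x₀` is `n^{\underline k}` times the
`k`-th entry of `e ᵥ* vandermonde u` with `eⱼ = γⱼ / uⱼⁿ`, and this Vandermonde matrix is
invertible. -/
theorem exists_iteratedDeriv_sum_mul_sub_pow_eq [CharZero 𝕜] {m n : ℕ} (hmn : m ≤ n)
    {β : Fin m → 𝕜} (hβ : Function.Injective β) {x₀ : 𝕜} (hx₀ : x₀ ∉ Set.range β)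
    (c : ℕ → 𝕜) :
    ∃ γ : Fin m → 𝕜, ∀ k < m, iteratedDeriv k (fun x => ∑ j, γ j * (x - β j) ^ n) x₀ = c k := by
  set u : Fin m → 𝕜 := fun j => (x₀ - β j)⁻¹ with hu_def
  have hw : ∀ j, x₀ - β j ≠ 0 := fun j => sub_ne_zero.mpr fun h => hx₀ ⟨j, h.symm⟩
  have hu : Function.Injective u := fun i j h => hβ (by simpa [u] using h)
  have hV : IsUnit (Matrix.vandermonde u) := by
    rw [Matrix.isUnit_iff_isUnit_det, isUnit_iff_ne_zero, Matrix.det_vandermonde_ne_zero_iff]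
    exact hu
  obtain ⟨e, he⟩ := Matrix.vecMul_surjective_iff_isUnit.mpr hV fun k => c k / n.descFactorial k
  refine ⟨fun j => e j * u j ^ n, fun k hk => ?_⟩
  have hD : (n.descFactorial k : 𝕜) ≠ 0 :=
    Nat.cast_ne_zero.mpr (Nat.descFactorial_pos.mpr (by omega)).ne'
  have hterm : ∀ j, e j * u j ^ n * (n.descFactorial k * (x₀ - β j) ^ (n - k)) =
      n.descFactorial k * (e j * u j ^ k) := fun j => by
    have hcancel : u j ^ (n - k) * (x₀ - β j) ^ (n - k) = 1 := by
      rw [← mul_pow, hu_def, inv_mul_cancel₀ (hw j), one_pow]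
    have hsplit : u j ^ n = u j ^ k * u j ^ (n - k) := by
      rw [← pow_add, Nat.add_sub_cancel' (by omega)]
    rw [hsplit]
    linear_combination (e j * u j ^ k * n.descFactorial k) * hcancel
  have hk' := congrFun he ⟨k, hk⟩
  simp only [Matrix.vecMul, dotProduct, Matrix.vandermonde_apply] at hk'
  rw [iteratedDeriv_sum_mul_sub_pow]
  simp only [hterm, ← mul_sum, hk', mul_div_cancel₀ _ hD]

end

theorem diff_eqn_solutions_general
    (m n : ℕ) (hmn : m ≤ n)
    (β : Fin m → ℂ) (hβ : Function.Injective β)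
    (G : ℂ → ℂ) (hG : G = fun z => ∏ i, (z - β i))
    (F : ℂ → ℂ) (hF : Differentiable ℂ F) :
    (∀ z : ℂ, ∑ i ∈ Finset.range (m + 1),
        (-1 : ℂ) ^ i * (Nat.choose (n - m + i) i : ℂ) *
          iteratedDeriv i G z * iteratedDeriv (m - i) F z = 0)
      ↔ ∃ γ : Fin m → ℂ, F = fun z => ∑ i, γ i * (z - β i) ^ n := by
  set g : ℂ[X] := ∏ i, (X - C (β i))
  have hGg : G = fun z => g.eval z := by simp [hG, g, eval_prod]
  have hdeg : g.natDegree ≤ m := (natDegree_prod_le _ _).trans (by simp)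
  have hroot (j : Fin m) : g.IsRoot (β j) := by simp [g, eval_prod, prod_eq_zero_iff, sub_eq_zero]
  have hsol (γ : Fin m → ℂ) (z : ℂ) :
      diffEqnLHS m n G (fun x => ∑ j, γ j * (x - β j) ^ n) z = 0 := by
    rw [diffEqnLHS_sum_mul_sub_pow, hGg]
    simp only [diffEqnLHS_polynomial_sub_pow hdeg hmn (hroot _), mul_zero, sum_const_zero]
  refine ⟨fun hode => ?_, fun ⟨γ, hγ⟩ => hγ ▸ hsol γ⟩
  obtain ⟨x₀, hx₀⟩ : ∃ x₀, x₀ ∉ Set.range β := (Set.finite_range β).infinite_compl.nonempty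
  obtain ⟨γ, hγ⟩ := exists_iteratedDeriv_sum_mul_sub_pow_eq hmn hβ hx₀ (iteratedDeriv · F x₀)
  refine ⟨γ, Complex.eq_of_linearODE
    (a := fun i z => (-1) ^ i * ((n - m + i).choose i : ℂ) * iteratedDeriv i G z)
    (fun i => ?_) hF (by fun_prop) hode (hsol γ) ?_ fun k hk => (hγ k hk).symm⟩
  · simp only [hGg, Polynomial.iteratedDeriv_eval]
    fun_prop
  · simpa [hG, prod_eq_zero_iff, sub_eq_zero] using fun j h => hx₀ ⟨j, h.symm⟩

/-- **Lemma on the differential equation** (Lemma 2 of the paper): an entire function `F`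
satisfies `Σ_{i=0}^m (-1)^i C(n-m+i, i) G^{(i)}(x) F^{(m-i)}(x) = 0` if and only if
`F(x) = Σ_{i=1}^m γᵢ (x - βᵢ)^n` for some complex constants `γᵢ`. -/
theorem diff_eqn_solutions
    (m n : ℕ) (hm : 0 < m) (hmn : m ≤ n)
    (β : Fin m → ℂ) (hβ : Function.Injective β)
    (G : ℂ → ℂ) (hG : G = fun z => ∏ i, (z - β i))
    (F : ℂ → ℂ) (hF : Differentiable ℂ F) :
    (∀ z : ℂ, ∑ i ∈ Finset.range (m + 1),
        (-1 : ℂ) ^ i * (Nat.choose (n - m + i) i : ℂ) *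
          iteratedDeriv i G z * iteratedDeriv (m - i) F z = 0)
      ↔ ∃ γ : Fin m → ℂ, F = fun z => ∑ i, γ i * (z - β i) ^ n :=
  diff_eqn_solutions_general m n hmn β hβ G hG F hF
end

section
/- Let n ≥ 3 be an integer, t < 0 a rational number that is not a square in ℚ, and β₁ = a + b√t with a, b ∈ ℚ and b ≠ 0, so that ℚ(β₁) is an imaginary quadratic field; let β₂ = a − b√t be the complex conjugate of β₁. Let γ₁ be a nonzero element of ℚ(β₁) and γ₂ its complex conjugate, so that F(x) = γ₁(x−β₁)ⁿ + γ₂(x−β₂)ⁿ lies in ℚ[x]. Then all n roots of F(x) are real. -/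
/-!
Since `t < 0`, `√t` is purely imaginary, so `β₂ = conj β₁` with `β₁ ∉ ℝ`, and `γ₂ = conj γ₁`.
At a root `z`, `γ₁ (z - β₁)ⁿ = -conj γ₁ (z - conj β₁)ⁿ`; taking absolute values gives
`|z - β₁| = |z - conj β₁|`, so `z` lies on the perpendicular bisector of `β₁` and `conj β₁`,
which is the real axis.
-/

noncomputable section

/-- Principal branch square root: for `w = s·e^{iφ}` with `-π < φ ≤ π`,
`csqrt w = s^{1/2}·e^{iφ/2}`. -/
noncomputable def csqrt (w : ℂ) : ℂ := w ^ ((2 : ℂ))⁻¹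

open ComplexConjugate

theorem csqrt_sq (w : ℂ) : csqrt w ^ 2 = w :=
  Complex.cpow_ofNat_inv_pow w 2

theorem Complex.re_eq_zero_and_im_ne_zero_of_sq_eq_neg {c : ℂ} {r : ℝ} (hr : r < 0)
    (hc : c ^ 2 = r) : c.re = 0 ∧ c.im ≠ 0 := by
  have hre : c.re * c.re - c.im * c.im = r := by
    simpa [pow_two] using congrArg Complex.re hc
  have him : c.re * c.im + c.im * c.re = 0 := by
    simpa [pow_two] using congrArg Complex.im hc
  have hcim : c.im ≠ 0 := by
    intro h
    rw [h] at hre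
    nlinarith [sq_nonneg c.re]
  refine ⟨?_, hcim⟩
  have : c.re * c.im = 0 := by linarith
  exact (mul_eq_zero.mp this).resolve_right hcim

theorem Complex.im_eq_zero_of_norm_sub_eq_norm_sub_conj {z w : ℂ} (hw : w.im ≠ 0)
    (h : ‖z - w‖ = ‖z - conj w‖) : z.im = 0 := by
  have hsq : Complex.normSq (z - w) = Complex.normSq (z - conj w) := by
    rw [Complex.normSq_eq_norm_sq, Complex.normSq_eq_norm_sq, h]
  simp only [Complex.normSq_apply, Complex.sub_re, Complex.sub_im, Complex.conj_re,
    Complex.conj_im] at hsq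
  have : z.im * w.im = 0 := by linarith
  exact (mul_eq_zero.mp this).resolve_right hw

theorem Complex.norm_sub_eq_norm_sub_conj_of_mul_pow_add_conj_mul_pow_eq_zero {n : ℕ}
    (hn : n ≠ 0) {γ w z : ℂ} (hγ : γ ≠ 0)
    (h : γ * (z - w) ^ n + conj γ * (z - conj w) ^ n = 0) :
    ‖z - w‖ = ‖z - conj w‖ := by
  have hnorm : ‖γ‖ * ‖z - w‖ ^ n = ‖γ‖ * ‖z - conj w‖ ^ n := by
    simpa [norm_mul, norm_pow, Complex.norm_conj] using
      congrArg norm (eq_neg_of_add_eq_zero_left h)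
  exact (pow_left_strictMonoOn₀ hn).injOn (norm_nonneg _) (norm_nonneg _)
    (mul_left_cancel₀ (norm_ne_zero_iff.mpr hγ) hnorm)

theorem roots_real_imag_quadratic_case_general
    (n : ℕ) (hn : 3 ≤ n)
    (t : ℚ) (ht : t < 0)
    (a b : ℚ) (hb : b ≠ 0)
    (β₁ β₂ : ℂ)
    (hβ₁ : β₁ = (a : ℂ) + (b : ℂ) * csqrt (t : ℂ))
    (hβ₂ : β₂ = (a : ℂ) - (b : ℂ) * csqrt (t : ℂ))
    (γ₁ γ₂ : ℂ) (hγ₁0 : γ₁ ≠ 0)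
    (hγ₂ : γ₂ = (starRingEnd ℂ) γ₁)
    (F : ℂ → ℂ) (hF : F = fun z => γ₁ * (z - β₁) ^ n + γ₂ * (z - β₂) ^ n) :
    ∀ z : ℂ, F z = 0 → z.im = 0 := by
  intro z hz
  obtain ⟨hc_re, hc_im⟩ := Complex.re_eq_zero_and_im_ne_zero_of_sq_eq_neg
    (c := csqrt t) (r := t) (by exact_mod_cast ht) (by simpa using csqrt_sq (t : ℂ))
  have hβ₂_conj : β₂ = conj β₁ := by
    apply Complex.ext <;> simp [hβ₁, hβ₂, hc_re]
  have hβ₁_im : β₁.im ≠ 0 := by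
    simpa [hβ₁, hc_re] using And.intro hb hc_im
  subst hF hγ₂ hβ₂_conj
  exact Complex.im_eq_zero_of_norm_sub_eq_norm_sub_conj hβ₁_im
    (Complex.norm_sub_eq_norm_sub_conj_of_mul_pow_add_conj_mul_pow_eq_zero (by omega) hγ₁0 hz)

/-- **Lemma 5(a) of the paper**: in the imaginary quadratic case, all `n` roots of
`F(x) = γ₁(x-β₁)ⁿ + γ₂(x-β₂)ⁿ` are real. -/
theorem roots_real_imag_quadratic_case
    (n : ℕ) (hn : 3 ≤ n)
    (t : ℚ) (ht : t < 0) (hts : ¬∃ s : ℚ, s ^ 2 = t)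
    (a b : ℚ) (hb : b ≠ 0)
    (β₁ β₂ : ℂ)
    (hβ₁ : β₁ = (a : ℂ) + (b : ℂ) * csqrt (t : ℂ))
    (hβ₂ : β₂ = (a : ℂ) - (b : ℂ) * csqrt (t : ℂ))
    (γ₁ γ₂ : ℂ) (hγ₁0 : γ₁ ≠ 0)
    (hγ₁mem : ∃ e f : ℚ, γ₁ = (e : ℂ) + (f : ℂ) * β₁)
    (hγ₂ : γ₂ = (starRingEnd ℂ) γ₁)
    (F : ℂ → ℂ) (hF : F = fun z => γ₁ * (z - β₁) ^ n + γ₂ * (z - β₂) ^ n) :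
    ∀ z : ℂ, F z = 0 → z.im = 0 :=
  roots_real_imag_quadratic_case_general n hn t ht a b hb β₁ β₂ hβ₁ hβ₂ γ₁ γ₂ hγ₁0 hγ₂ F hF
end
end

section
/- Let n ≥ 3 be an integer, β₁, β₂, γ₁, γ₂ complex numbers with β₁ ≠ β₂, γ₁ ≠ 0, γ₂ ≠ 0, and define U(x), Z(x), W(x), F(x), P_r(x), Q_r(x) as in the context. Let α be a root of F and set S_r(x) = α·Q_r(x) − P_r(x). Then for every integer r ≥ 0 and every x ∈ ℂ such that W(x) is defined and is neither zero nor a negative real number, S_r(x) = {α·((x−β₂)·W(x)^{1/n} − (x−β₁)) − (β₁(x−β₂)·W(x)^{1/n} − β₂(x−β₁))}·X*_{n,r}(U(x), Z(x)) − (x−β₂)·(α−β₁)·U(x)^r·R_{1,n,r}(W(x)), where R_{m,n,r}(w) = [Γ(r+1+m/n)/(Γ(m/n)·r!)]·∫₁^w ((1−t)(t−w))^r·t^{m/n−r−1} dt, the integral taken along the straight segment from 1 to w. -/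
noncomputable section
open scoped BigOperators

/-- Principal branch `n`-th root: for `w = s·e^{iφ}` with `-π < φ ≤ π`,
`cnroot n w = s^{1/n}·e^{iφ/n}`. -/
noncomputable def cnroot (n : ℕ) (w : ℂ) : ℂ := w ^ ((n : ℂ))⁻¹

/-- Coefficient of `x^k` in the hypergeometric polynomial
`₂F₁(-r, -r-m/n; 1-m/n; x)`. -/
noncomputable def hyperCoeff (m n r k : ℕ) : ℚ :=
  (ascPochhammer ℚ k).eval (-(r : ℚ)) * (ascPochhammer ℚ k).eval (-(r : ℚ) - (m : ℚ)/n) /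
    ((ascPochhammer ℚ k).eval (1 - (m : ℚ)/n) * (Nat.factorial k))

/-- The hypergeometric polynomial `X_{m,n,r}(x) = ₂F₁(-r, -r-m/n; 1-m/n; x)`. -/
noncomputable def hyperX (m n r : ℕ) : Polynomial ℚ :=
  ∑ k ∈ Finset.range (r + 1), Polynomial.C (hyperCoeff m n r k) * Polynomial.X ^ k

/-- `D_{m,n,r}`: the least positive integer `D` such that `D·X_{m,n,r}` has
integer coefficients. -/
noncomputable def hyperD (m n r : ℕ) : ℕ :=
  sInf {D : ℕ | 0 < D ∧ ∀ k, ((D : ℚ) * (hyperX m n r).coeff k).den = 1}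

/-- `N_{d,n,r}` (for parameter `m`): the gcd of the numerators of the coefficients of
`X_{m,n,r}(1 - d·x)`. -/
noncomputable def hyperN (m d n r : ℕ) : ℕ :=
  Finset.gcd (Finset.range (r + 1))
    fun k => (((hyperX m n r).comp (1 - Polynomial.C (d : ℚ) * Polynomial.X)).coeff k).num.natAbs

/-- `𝒩_{d,n} = Π_{p | n} p^{min(v_p(d), v_p(n) + 1/(p-1))}`. -/
noncomputable def scriptN (d n : ℕ) : ℝ :=
  ∏ p ∈ n.primeFactors,
    (p : ℝ) ^ min ((padicValNat p d : ℝ)) ((padicValNat p n : ℝ) + 1 / ((p : ℝ) - 1))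

/-- Value of the hypergeometric polynomial `X_{m,n,r}` at a complex number. -/
noncomputable def hyperXc (m n r : ℕ) (x : ℂ) : ℂ := Polynomial.aeval x (hyperX m n r)

/-- The homogenised hypergeometric polynomial `X*_{m,n,r}(x,y) = y^r·X_{m,n,r}(x/y)`. -/
noncomputable def hyperXstar (m n r : ℕ) (x y : ℂ) : ℂ := y ^ r * hyperXc m n r (x / y)

/-- `K` is the subfield `ℚ` of `ℂ`. -/
def IsRatSubfield (K : Subfield ℂ) : Prop := ∀ z : ℂ, z ∈ K ↔ ∃ a : ℚ, z = (a : ℂ)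

/-- `K` is an imaginary quadratic number field viewed as a subfield of `ℂ`. -/
def IsImagQuadSubfield (K : Subfield ℂ) : Prop :=
  ∃ t : ℤ, t < 0 ∧ ∀ z : ℂ, z ∈ K ↔ ∃ a b : ℚ, z = (a : ℂ) + (b : ℂ) * csqrt (t : ℂ)

/-- `R_{m,n,r}(w) = [Γ(r+1+m/n)/(Γ(m/n)·r!)]·∫₁^w ((1-t)(t-w))^r·t^{m/n-r-1} dt`,
the integral taken along the straight segment from `1` to `w`
(parametrised by `t = 1 + l(w-1)`, `0 ≤ l ≤ 1`), with principal branch powers. -/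
noncomputable def Rmnr (m n r : ℕ) (w : ℂ) : ℂ :=
  Complex.Gamma ((r : ℂ) + 1 + (m : ℂ)/n) / (Complex.Gamma ((m : ℂ)/n) * (Nat.factorial r)) *
    ∫ l in (0:ℝ)..1,
      ((1 - (1 + (l : ℂ) * (w - 1))) * ((1 + (l : ℂ) * (w - 1)) - w)) ^ r *
        (1 + (l : ℂ) * (w - 1)) ^ ((m : ℂ)/n - (r : ℂ) - 1) * (w - 1)

/-!
Put `μ = m/n`. Expanding `((1 - t)(t - w))^r` by the binomial theorem turns the integrand of
`R_{m,n,r}` into a combination of the powers `t^(μ + i - j - 1)`, so the integral along the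
segment from `1` to `w` is `F(w) - F(1)` for an explicit primitive `F`. Both values collapse through
the partial-fraction identity `∑ᵢ (-1)^i C(r,i) / (x + i) = r! / (x)_{r+1}`. Together with
`Γ(μ + r + 1) / Γ(μ) = (μ)_{r+1}` and the closed form
`c_j = (-1)^j C(r,j) (μ)_{r+1} / (μ - j)_{r+1}` of the coefficients of `X_{m,n,r}`, the term
`F(1)` cancels `X_{m,n,r}(w)` and `F(w)` becomes `w^(μ + r) X_{m,n,r}(1/w)`. The remainder
formula is this identity at `w = W(x)`, multiplied by `(α - β₁)(x - β₂)U(x)^r`, once `Z = W·U`.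
-/

open Finset Polynomial
open scoped Nat

theorem sum_range_eq_of_add_eq {M : Type*} [AddCommMonoid M] {n : ℕ} {f g : ℕ → M}
    (h : ∀ i j, i + j = n → f i = g j) : ∑ i ∈ range (n + 1), f i = ∑ j ∈ range (n + 1), g j := by
  rw [← sum_range_reflect g]
  refine sum_congr rfl fun i hi => h i _ ?_
  have := mem_range.mp hi
  omega

section Pochhammer

variable {R : Type*}

theorem ascPochhammer_eval_add [CommSemiring R] (a b : ℕ) (x : R) :
    (ascPochhammer R (a + b)).eval x =
      (ascPochhammer R a).eval x * (ascPochhammer R b).eval (x + a) := by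
  rw [← ascPochhammer_mul, eval_mul, eval_comp, eval_add, eval_X, eval_natCast]

theorem ascPochhammer_eval_mul_add_natCast [CommSemiring R] (n : ℕ) (x : R) :
    (ascPochhammer R n).eval x * (x + n) = x * (ascPochhammer R n).eval (x + 1) := by
  rw [← ascPochhammer_succ_eval, ascPochhammer_succ_left, eval_mul, eval_X, eval_comp, eval_add,
    eval_X, eval_one]

theorem ascPochhammer_eval_neg_eq [CommRing R] (n : ℕ) (x : R) :
    (ascPochhammer R n).eval (-x) = (-1) ^ n * (ascPochhammer R n).eval (x - n + 1) := by
  rw [ascPochhammer_eval_neg_eq_descPochhammer, descPochhammer_eval_eq_ascPochhammer]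

theorem ascPochhammer_eval_ne_zero [CommRing R] [IsDomain R] {x : R} (hx : ∀ k : ℤ, x ≠ k)
    (n : ℕ) : (ascPochhammer R n).eval x ≠ 0 := by
  rw [Ne, ascPochhammer_eval_eq_zero_iff]
  rintro ⟨k, -, hk⟩
  exact hx (-k) (by push_cast; rw [hk, neg_neg])

end Pochhammer

section PartialFractions

variable {K : Type*} [Field K]

theorem sum_neg_one_pow_mul_choose_div_add (r : ℕ) (x : K)
    (hx : (ascPochhammer K (r + 1)).eval x ≠ 0) :
    ∑ i ∈ range (r + 1), (-1) ^ i * r.choose i / (x + i) =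
      r ! / (ascPochhammer K (r + 1)).eval x := by
  induction r generalizing x with
  | zero => simp
  | succ r ih =>
    have hleft := ascPochhammer_succ_eval (r + 1) x
    have hright :
        (ascPochhammer K (r + 2)).eval x = x * (ascPochhammer K (r + 1)).eval (x + 1) := by
      rw [hleft, ascPochhammer_eval_mul_add_natCast]
    have hPx : (ascPochhammer K (r + 1)).eval x ≠ 0 := left_ne_zero_of_mul (hleft ▸ hx)
    have hPx1 : (ascPochhammer K (r + 1)).eval (x + 1) ≠ 0 := right_ne_zero_of_mul (hright ▸ hx)
    have hpascal := sum_choose_succ_mul (fun i _ => (-1 : K) ^ i / (x + i)) r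
    have hshift : ∑ i ∈ range (r + 1), (r.choose i : K) * ((-1) ^ (i + 1) / (x + (i + 1 : ℕ))) =
        -∑ i ∈ range (r + 1), (-1) ^ i * r.choose i / (x + 1 + i) := by
      rw [← sum_neg_distrib]
      refine sum_congr rfl fun i _ => ?_
      push_cast
      ring
    calc ∑ i ∈ range (r + 2), (-1) ^ i * ((r + 1).choose i : K) / (x + i)
        = ∑ i ∈ range (r + 1), (-1) ^ i * r.choose i / (x + i) -
            ∑ i ∈ range (r + 1), (-1) ^ i * r.choose i / (x + 1 + i) := by
          rw [sub_eq_add_neg, ← hshift]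
          simp only [mul_comm ((-1 : K) ^ _), mul_div_assoc]
          exact hpascal
      _ = (r + 1)! / (ascPochhammer K (r + 2)).eval x := by
        rw [ih x hPx, ih (x + 1) hPx1, div_sub_div _ _ hPx hPx1,
          div_eq_div_iff (mul_ne_zero hPx hPx1) hx, Nat.factorial_succ]
        push_cast at hleft ⊢
        linear_combination (r ! : K) * (ascPochhammer K (r + 1)).eval (x + 1) * hleft -
          (r ! : K) * (ascPochhammer K (r + 1)).eval x * hright

theorem sum_neg_one_pow_mul_choose_div_sub (r : ℕ) (x : K)
    (hx : (ascPochhammer K (r + 1)).eval (x - r) ≠ 0) :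
    ∑ j ∈ range (r + 1), (-1) ^ j * r.choose j / (x - j) =
      (-1) ^ r * r ! / (ascPochhammer K (r + 1)).eval (x - r) := by
  have hneg : (ascPochhammer K (r + 1)).eval (-x) =
      (-1) ^ (r + 1) * (ascPochhammer K (r + 1)).eval (x - r) := by
    rw [ascPochhammer_eval_neg_eq]
    push_cast
    ring_nf
  have hsum := sum_neg_one_pow_mul_choose_div_add r (-x)
    (by rw [hneg]; exact mul_ne_zero (pow_ne_zero _ (neg_ne_zero.mpr one_ne_zero)) hx)
  calc ∑ j ∈ range (r + 1), (-1) ^ j * r.choose j / (x - j)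
      = -∑ j ∈ range (r + 1), (-1) ^ j * r.choose j / (-x + j) := by
        rw [← sum_neg_distrib]
        refine sum_congr rfl fun j _ => ?_
        rw [show -x + j = -(x - j) by ring, div_neg, neg_neg]
    _ = (-1) ^ r * r ! / (ascPochhammer K (r + 1)).eval (x - r) := by
        rw [hsum, hneg, pow_succ]
        field_simp
        rw [← pow_mul, Even.neg_one_pow ⟨r, by ring⟩, mul_one]

end PartialFractions

theorem hyperCoeff_mul_ascPochhammer (m n r j : ℕ) (hμ : ∀ k : ℤ, (m : ℚ) / n ≠ k) :
    hyperCoeff m n r j * (ascPochhammer ℚ (r + 1)).eval ((m : ℚ) / n - j) =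
      (-1) ^ j * r.choose j * (ascPochhammer ℚ (r + 1)).eval ((m : ℚ) / n) := by
  set μ : ℚ := (m : ℚ) / n
  have hfirst : (ascPochhammer ℚ j).eval (-(r : ℚ)) = (-1) ^ j * (j ! * r.choose j) := by
    rw [ascPochhammer_eval_neg_eq_descPochhammer, descPochhammer_eval_eq_descFactorial,
      Nat.descFactorial_eq_factorial_mul_choose]
    push_cast
    ring
  have hsecond : (ascPochhammer ℚ j).eval (-r - μ) =
      (-1) ^ j * (ascPochhammer ℚ j).eval (μ - j + ↑(r + 1)) := by
    rw [show -(r : ℚ) - μ = -(r + μ) by ring, ascPochhammer_eval_neg_eq]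
    push_cast
    ring_nf
  have hthird : (ascPochhammer ℚ j).eval (1 - μ) = (-1) ^ j * (ascPochhammer ℚ j).eval (μ - j) := by
    rw [show 1 - μ = -(μ - 1) by ring, ascPochhammer_eval_neg_eq]
    ring_nf
  -- After these reflections both sides are `(μ - j)_{r + 1 + j}`.
  have hsplit : (ascPochhammer ℚ j).eval (μ - j) * (ascPochhammer ℚ (r + 1)).eval μ =
      (ascPochhammer ℚ (r + 1)).eval (μ - j) * (ascPochhammer ℚ j).eval (μ - j + ↑(r + 1)) := by
    have h := ascPochhammer_eval_add j (r + 1) (μ - j)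
    rw [add_comm j, ascPochhammer_eval_add, sub_add_cancel] at h
    exact h.symm
  have hne : (ascPochhammer ℚ j).eval (μ - j) ≠ 0 :=
    ascPochhammer_eval_ne_zero (fun k h => hμ (k + j) (by push_cast; linear_combination h)) j
  rw [hyperCoeff, hfirst, hsecond, hthird]
  field_simp
  linear_combination -(r.choose j : ℚ) * hsplit

theorem ratCast_ascPochhammer_eval (k : ℕ) (q : ℚ) :
    (((ascPochhammer ℚ k).eval q : ℚ) : ℂ) = (ascPochhammer ℂ k).eval (q : ℂ) := by
  rw [ascPochhammer_eval₂ (Rat.castHom ℂ)]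
  exact (eval₂_at_apply (Rat.castHom ℂ) q).symm

theorem hyperXc_eq_sum (m n r : ℕ) (hμ : ∀ k : ℤ, (m : ℂ) / n ≠ k) (z : ℂ) :
    hyperXc m n r z = ∑ j ∈ range (r + 1), (-1) ^ j * r.choose j *
      ((ascPochhammer ℂ (r + 1)).eval ((m : ℂ) / n) /
        (ascPochhammer ℂ (r + 1)).eval ((m : ℂ) / n - j)) * z ^ j := by
  have hμℚ : ∀ k : ℤ, (m : ℚ) / n ≠ k := fun k h => hμ k (by
    simpa using congrArg (Rat.cast : ℚ → ℂ) h)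
  simp only [hyperXc, hyperX, map_sum, map_mul, aeval_C, aeval_X_pow, eq_ratCast]
  refine sum_congr rfl fun j _ => ?_
  have hcoeff := congrArg (Rat.cast : ℚ → ℂ) (hyperCoeff_mul_ascPochhammer m n r j hμℚ)
  simp only [Rat.cast_mul, Rat.cast_pow, Rat.cast_neg, Rat.cast_one, Rat.cast_natCast,
    ratCast_ascPochhammer_eval, Rat.cast_sub, Rat.cast_div] at hcoeff
  have hne : (ascPochhammer ℂ (r + 1)).eval ((m : ℂ) / n - j) ≠ 0 :=
    ascPochhammer_eval_ne_zero (fun k h => hμ (k + j) (by push_cast; linear_combination h)) _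
  rw [← eq_div_iff hne] at hcoeff
  rw [hcoeff, mul_div_assoc]

section Remainder

open Complex

def remainderPrimitive (r : ℕ) (μ w z : ℂ) : ℂ :=
  ∑ i ∈ range (r + 1), ∑ j ∈ range (r + 1),
    (-1) ^ (i + j) * r.choose i * r.choose j * w ^ j * (z ^ (μ + i - j) / (μ + i - j))

theorem one_sub_mul_sub_pow_mul_cpow (r : ℕ) (μ w : ℂ) {z : ℂ} (hz : z ≠ 0) :
    ((1 - z) * (z - w)) ^ r * z ^ (μ - r - 1) =
      ∑ i ∈ range (r + 1), ∑ j ∈ range (r + 1),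
        (-1) ^ (i + j) * r.choose i * r.choose j * w ^ j * z ^ (μ + i - j - 1) := by
  rw [mul_pow, show 1 - z = -z + 1 by ring, show z - w = -w + z by ring, add_pow, add_pow,
    sum_mul_sum, sum_mul]
  refine sum_congr rfl fun i _ => ?_
  rw [sum_mul]
  refine sum_congr rfl fun j hj => ?_
  have hjr : j ≤ r := Nat.lt_succ_iff.mp (mem_range.mp hj)
  have hexp : μ + i - j - 1 = μ - r - 1 + (i : ℕ) + ((r - j : ℕ) : ℂ) := by
    rw [Nat.cast_sub hjr]; ring
  rw [hexp, cpow_add _ _ hz, cpow_add _ _ hz, cpow_natCast, cpow_natCast, neg_pow z, neg_pow w,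
    one_pow, pow_add]
  ring

theorem hasDerivAt_remainderPrimitive (r : ℕ) {μ : ℂ} (hμ : ∀ k : ℤ, μ ≠ k) (w : ℂ) {z : ℂ}
    (hz : z ∈ slitPlane) :
    HasDerivAt (remainderPrimitive r μ w) (((1 - z) * (z - w)) ^ r * z ^ (μ - r - 1)) z := by
  rw [one_sub_mul_sub_pow_mul_cpow r μ w (slitPlane_ne_zero hz)]
  refine HasDerivAt.fun_sum fun i _ => HasDerivAt.fun_sum fun j _ => ?_
  have hc : μ + i - j ≠ 0 := fun h => hμ (j - i) (by push_cast; linear_combination h)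
  exact (((hasStrictDerivAt_cpow_const hz).hasDerivAt.div_const _).const_mul _).congr_deriv
    (by rw [mul_div_cancel_left₀ _ hc])

theorem integral_segment_one_eq_sub {f f' : ℂ → ℂ} {w : ℂ} (hw : w ∈ slitPlane)
    (hcont : ContinuousOn f' slitPlane) (hderiv : ∀ z ∈ slitPlane, HasDerivAt f (f' z) z) :
    ∫ l in (0 : ℝ)..1, f' (1 + l * (w - 1)) * (w - 1) = f w - f 1 := by
  have hseg : ∀ l ∈ Set.Icc (0 : ℝ) 1, 1 + l • (w - 1) ∈ slitPlane := fun l hl =>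
    starConvex_one_slitPlane.add_smul_mem (by rwa [add_sub_cancel]) hl.1 hl.2
  have hftc := intervalIntegral.integral_unitInterval_deriv_eq_sub (hcont.comp (by fun_prop) hseg)
    (fun l hl => hderiv _ (hseg l hl))
  simp only [real_smul, add_sub_cancel, smul_eq_mul] at hftc
  rw [intervalIntegral.integral_mul_const, mul_comm, hftc]

theorem Rmnr_eq (m n r : ℕ) (hμ : ∀ k : ℤ, (m : ℂ) / n ≠ k) {w : ℂ} (hw : w ∈ slitPlane) :
    Rmnr m n r w = (ascPochhammer ℂ (r + 1)).eval ((m : ℂ) / n) / r ! *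
      (remainderPrimitive r ((m : ℂ) / n) w w - remainderPrimitive r ((m : ℂ) / n) w 1) := by
  have hGamma : Gamma ((r : ℂ) + 1 + (m : ℂ) / n) / Gamma ((m : ℂ) / n) =
      (ascPochhammer ℂ (r + 1)).eval ((m : ℂ) / n) := by
    rw [← Gamma_add_nat_div_Gamma_eq _ fun k h => hμ (-k) (by push_cast; exact h)]
    push_cast
    ring_nf
  have hcont : ContinuousOn (fun z => ((1 - z) * (z - w)) ^ r * z ^ ((m : ℂ) / n - r - 1))
      slitPlane :=
    (by fun_prop : Continuous fun z : ℂ => ((1 - z) * (z - w)) ^ r).continuousOn.mul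
      (continuousOn_id.cpow_const fun z hz => hz)
  rw [Rmnr, div_mul_eq_div_div, hGamma, integral_segment_one_eq_sub hw hcont
    fun z hz => hasDerivAt_remainderPrimitive r hμ w hz]

theorem remainderPrimitive_sub (r : ℕ) {μ : ℂ} (hμ : ∀ k : ℤ, μ ≠ k) {w : ℂ} (hw : w ≠ 0) :
    remainderPrimitive r μ w w - remainderPrimitive r μ w 1 =
      (-1) ^ r * r ! * ∑ i ∈ range (r + 1),
          (-1) ^ i * r.choose i * w ^ μ * w ^ i / (ascPochhammer ℂ (r + 1)).eval (μ + i - r) -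
        r ! * ∑ j ∈ range (r + 1),
          (-1) ^ j * r.choose j * w ^ j / (ascPochhammer ℂ (r + 1)).eval (μ - j) := by
  have hpow : ∀ i j : ℕ, w ^ j * w ^ (μ + i - j) = w ^ μ * w ^ i := fun i j => by
    rw [← cpow_natCast, ← cpow_natCast, ← cpow_add _ _ hw, ← cpow_add _ _ hw]
    ring_nf
  have hat_w : remainderPrimitive r μ w w = (-1) ^ r * r ! * ∑ i ∈ range (r + 1),
      (-1) ^ i * r.choose i * w ^ μ * w ^ i / (ascPochhammer ℂ (r + 1)).eval (μ + i - r) := by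
    rw [remainderPrimitive, mul_sum]
    refine sum_congr rfl fun i _ => ?_
    have hsum := sum_neg_one_pow_mul_choose_div_sub r (μ + i)
      (ascPochhammer_eval_ne_zero
        (fun k h => hμ (k + r - i) (by push_cast; linear_combination h)) _)
    rw [show (-1) ^ r * (r ! : ℂ) * ((-1) ^ i * r.choose i * w ^ μ * w ^ i /
        (ascPochhammer ℂ (r + 1)).eval (μ + i - r)) = (-1) ^ i * r.choose i * w ^ μ * w ^ i *
        ((-1) ^ r * r ! / (ascPochhammer ℂ (r + 1)).eval (μ + i - r)) by ring, ← hsum, mul_sum]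
    refine sum_congr rfl fun j _ => ?_
    rw [pow_add]
    linear_combination
      ((-1) ^ i * (-1) ^ j * r.choose i * r.choose j / (μ + i - j) : ℂ) * hpow i j
  have hat_one : remainderPrimitive r μ w 1 = r ! * ∑ j ∈ range (r + 1),
      (-1) ^ j * r.choose j * w ^ j / (ascPochhammer ℂ (r + 1)).eval (μ - j) := by
    rw [remainderPrimitive, sum_comm, mul_sum]
    refine sum_congr rfl fun j _ => ?_
    have hsum := sum_neg_one_pow_mul_choose_div_add r (μ - j)
      (ascPochhammer_eval_ne_zero (fun k h => hμ (k + j) (by push_cast; linear_combination h)) _)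
    simp only [sub_add_eq_add_sub] at hsum
    rw [show (r ! : ℂ) * ((-1) ^ j * r.choose j * w ^ j / (ascPochhammer ℂ (r + 1)).eval (μ - j)) =
        (-1) ^ j * r.choose j * w ^ j * (r ! / (ascPochhammer ℂ (r + 1)).eval (μ - j)) by ring,
      ← hsum, mul_sum]
    refine sum_congr rfl fun i _ => ?_
    rw [one_cpow, pow_add]
    ring
  rw [hat_w, hat_one]

theorem hyperXc_add_Rmnr (m n r : ℕ) (hμ : ∀ k : ℤ, (m : ℂ) / n ≠ k) {w : ℂ}
    (hw : w ∈ slitPlane) :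
    hyperXc m n r w + Rmnr m n r w = w ^ ((m : ℂ) / n) * w ^ r * hyperXc m n r (1 / w) := by
  set μ : ℂ := (m : ℂ) / n
  have hw0 : w ≠ 0 := slitPlane_ne_zero hw
  have hfact : (r ! : ℂ) ≠ 0 := by exact_mod_cast r.factorial_ne_zero
  rw [hyperXc_eq_sum m n r hμ, hyperXc_eq_sum m n r hμ, Rmnr_eq m n r hμ hw,
    remainderPrimitive_sub r hμ hw0]
  have hpoly : (ascPochhammer ℂ (r + 1)).eval μ / r ! * (r ! * ∑ j ∈ range (r + 1),
      (-1) ^ j * r.choose j * w ^ j / (ascPochhammer ℂ (r + 1)).eval (μ - j)) =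
      ∑ j ∈ range (r + 1), (-1) ^ j * r.choose j *
        ((ascPochhammer ℂ (r + 1)).eval μ / (ascPochhammer ℂ (r + 1)).eval (μ - j)) * w ^ j := by
    rw [← mul_assoc, div_mul_cancel₀ _ hfact, mul_sum]
    exact sum_congr rfl fun j _ => by ring
  have hreflect : w ^ μ * w ^ r * ∑ j ∈ range (r + 1), (-1) ^ j * r.choose j *
      ((ascPochhammer ℂ (r + 1)).eval μ / (ascPochhammer ℂ (r + 1)).eval (μ - j)) * (1 / w) ^ j =
      (ascPochhammer ℂ (r + 1)).eval μ / r ! * ((-1) ^ r * r ! * ∑ i ∈ range (r + 1),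
        (-1) ^ i * r.choose i * w ^ μ * w ^ i / (ascPochhammer ℂ (r + 1)).eval (μ + i - r)) := by
    rw [mul_sum, mul_sum, mul_sum]
    refine sum_range_eq_of_add_eq fun j i hji => ?_
    subst hji
    have hsign : (-1 : ℂ) ^ (j + i) * (-1) ^ i = (-1) ^ j := by
      rw [pow_add, mul_assoc, ← pow_add, Even.neg_one_pow ⟨i, rfl⟩, mul_one]
    have hpow : w ^ (j + i) * (1 / w) ^ j = w ^ i := by
      rw [pow_add, one_div_pow]; field_simp
    rw [Nat.choose_symm_add, show μ + i - ((j + i : ℕ) : ℂ) = μ - j by push_cast; ring]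
    field_simp
    linear_combination (w ^ μ * (j + i).choose i * (ascPochhammer ℂ (j + i + 1)).eval μ /
      (ascPochhammer ℂ (j + i + 1)).eval (μ - j)) * ((-1) ^ j * hpow - w ^ i * hsign)
  linear_combination -hpoly - hreflect

end Remainder

theorem one_div_natCast_ne_intCast {n : ℕ} (hn : 2 ≤ n) (k : ℤ) : (1 : ℂ) / n ≠ k := by
  intro h
  have hkn : ((k * n : ℤ) : ℂ) = 1 := by
    push_cast
    rw [← h, div_mul_cancel₀ _ (by exact_mod_cast (by omega : n ≠ 0))]
  have hdvd : (n : ℤ) ∣ 1 := ⟨k, by rw [mul_comm]; exact_mod_cast hkn.symm⟩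
  have := Int.le_of_dvd one_pos hdvd
  omega

theorem Complex.mem_slitPlane_of_not_nonpos {z : ℂ} (h0 : z ≠ 0) (hneg : ¬(z.im = 0 ∧ z.re < 0)) :
    z ∈ Complex.slitPlane := by
  rw [Complex.mem_slitPlane_iff]
  by_contra! hz
  rcases hz.1.lt_or_eq with hlt | heq
  · exact hneg ⟨hz.2, hlt⟩
  · exact h0 (Complex.ext heq hz.2)

theorem remainder_formula_general
    (n : ℕ) (hn : 3 ≤ n)
    (β₁ β₂ : ℂ)
    (U Z W : ℂ → ℂ)
    (hW : W = fun x => Z x / U x)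
    (α : ℂ)
    (r : ℕ) (x : ℂ)
    (hdef : U x ≠ 0) (hW0 : W x ≠ 0) (hWneg : ¬((W x).im = 0 ∧ (W x).re < 0)) :
    -- S_r(x) = α·Q_r(x) - P_r(x), written out via the homogenised hypergeometric values
    α * ((x - β₂) * hyperXstar 1 n r (Z x) (U x) - (x - β₁) * hyperXstar 1 n r (U x) (Z x))
      - (β₁ * (x - β₂) * hyperXstar 1 n r (Z x) (U x)
          - β₂ * (x - β₁) * hyperXstar 1 n r (U x) (Z x))
    = (α * ((x - β₂) * cnroot n (W x) - (x - β₁))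
        - (β₁ * (x - β₂) * cnroot n (W x) - β₂ * (x - β₁))) *
        hyperXstar 1 n r (U x) (Z x)
      - (x - β₂) * (α - β₁) * (U x) ^ r * Rmnr 1 n r (W x) := by
  have hWx : W x = Z x / U x := by rw [hW]
  have hZx : Z x = W x * U x := by rw [hWx, div_mul_cancel₀ _ hdef]
  have hkey := hyperXc_add_Rmnr 1 n r (by simpa using one_div_natCast_ne_intCast (by omega))
    (Complex.mem_slitPlane_of_not_nonpos hW0 hWneg)
  have hstarZU : hyperXstar 1 n r (Z x) (U x) = U x ^ r * hyperXc 1 n r (W x) := by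
    rw [hyperXstar, ← hWx]
  have hstarUZ : hyperXstar 1 n r (U x) (Z x) = W x ^ r * U x ^ r * hyperXc 1 n r (1 / W x) := by
    rw [hyperXstar, hZx, mul_pow, div_mul_cancel_right₀ hdef, one_div]
  rw [hstarZU, hstarUZ, cnroot, ← one_div]
  push_cast at hkey
  linear_combination (α - β₁) * (x - β₂) * U x ^ r * hkey

/-- **Remainder formula** (Lemma 9 of the paper): the explicit hypergeometric expression
for `S_r(x) = α·Q_r(x) - P_r(x)`. -/
theorem remainder_formula
    (n : ℕ) (hn : 3 ≤ n)
    (β₁ β₂ γ₁ γ₂ : ℂ) (hβ : β₁ ≠ β₂) (hγ₁ : γ₁ ≠ 0) (hγ₂ : γ₂ ≠ 0)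
    (U Z W F : ℂ → ℂ)
    (hU : U = fun x => -γ₂ * (x - β₂) ^ n)
    (hZ : Z = fun x => γ₁ * (x - β₁) ^ n)
    (hW : W = fun x => Z x / U x)
    (hF : F = fun x => γ₁ * (x - β₁) ^ n + γ₂ * (x - β₂) ^ n)
    (α : ℂ) (hα : F α = 0)
    (r : ℕ) (x : ℂ)
    (hdef : U x ≠ 0) (hW0 : W x ≠ 0) (hWneg : ¬((W x).im = 0 ∧ (W x).re < 0)) :
    -- S_r(x) = α·Q_r(x) - P_r(x), written out via the homogenised hypergeometric values
    α * ((x - β₂) * hyperXstar 1 n r (Z x) (U x) - (x - β₁) * hyperXstar 1 n r (U x) (Z x))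
      - (β₁ * (x - β₂) * hyperXstar 1 n r (Z x) (U x)
          - β₂ * (x - β₁) * hyperXstar 1 n r (U x) (Z x))
    = (α * ((x - β₂) * cnroot n (W x) - (x - β₁))
        - (β₁ * (x - β₂) * cnroot n (W x) - β₂ * (x - β₁))) *
        hyperXstar 1 n r (U x) (Z x)
      - (x - β₂) * (α - β₁) * (U x) ^ r * Rmnr 1 n r (W x) :=
  remainder_formula_general n hn β₁ β₂ U Z W hW α r x hdef hW0 hWneg
end
end
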